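/- Fix r > 0. For (ξ,η) ∈ ℂ², let G_{(ξ,η)} be the real symmetric bilinear form on ℂ² given by G_{(ξ,η)}((u,w),(u′,w′)) = (1+ξξ̄)⁻²·[Im(w̄u′ + w̄′u) + (2·Im(ξ̄η)/(1+ξξ̄))·(uū′ + u′ū)], and let F : ℂ² → ℝ be F(ξ,η) = 4ηη̄ − r²(1+ξξ̄)². Then for every (ξ,η) with F(ξ,η) = 0 and every v ∈ ℂ² such that G_{(ξ,η)}(v,w) = 0 for all w in the kernel of the Fréchet derivative of F at (ξ,η), one has G_{(ξ,η)}(v,v) = 0. That is, the level hypersurface {F = 0} is null with respect to G: its G-normal at each point is a null vector. -/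

import Mathlib

/-- The canonical neutral metric on L(ℝ³) ≅ Tℂ in local holomorphic coordinates (ξ,η),
as a real symmetric bilinear form on ℂ² at the point p = (ξ,η):
G((u,w),(u′,w′)) = (1+ξξ̄)⁻²·[Im(w̄u′ + w̄′u) + (2·Im(ξ̄η)/(1+ξξ̄))·(uū′ + u′ū)]. -/
noncomputable def Gneutral (p : ℂ × ℂ) (v w : ℂ × ℂ) : ℝ :=
  ((1 + Complex.normSq p.1) ^ 2)⁻¹ *
    ((((starRingEnd ℂ) v.2) * w.1 + ((starRingEnd ℂ) w.2) * v.1).im +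
      (2 * (((starRingEnd ℂ) p.1) * p.2).im / (1 + Complex.normSq p.1)) *
        (v.1 * ((starRingEnd ℂ) w.1) + w.1 * ((starRingEnd ℂ) v.1)).re)

/-- F(ξ,η) = 4ηη̄ − r²(1+ξξ̄)²; the hypersurface {F = 0} is the set of oriented lines
tangent to the round sphere of radius r centred at the origin. -/
noncomputable def Ftangent (r : ℝ) (p : ℂ × ℂ) : ℝ :=
  4 * Complex.normSq p.2 - r ^ 2 * (1 + Complex.normSq p.1) ^ 2

/-!
The tangent space of `{F = 0}` at `p = (ξ, η)` contains `(0, iη)` (rotating the line about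
the parallel axis through the origin) and, for every `u`, the vector `(u, c η)` with
`c = 2 Re(ξ̄u)/(1+ξξ̄)` (moving the direction by `u` while scaling `η` along with `1+ξξ̄`, which
keeps the distance `2|η|/(1+ξξ̄)` to the origin fixed). A purely algebraic identity expresses
`G(v,v)` as a combination of `G(v, (v₁, c η))` and `G(v, (0, iη))`, so a `G`-normal `v` is null.
-/

open Complex ComplexConjugate

lemma fderiv_Ftangent_apply (r : ℝ) (p w : ℂ × ℂ) :
    fderiv ℝ (Ftangent r) p w =
      8 * (conj p.2 * w.2).re - 4 * r ^ 2 * (1 + normSq p.1) * (conj p.1 * w.1).re := by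
  have hS : HasFDerivAt (fun q : ℂ × ℂ => 1 + ‖q.1‖ ^ 2)
      ((2 : ℕ) • (innerSL ℝ p.1).comp (ContinuousLinearMap.fst ℝ ℂ ℂ)) p :=
    hasFDerivAt_fst.norm_sq.const_add 1
  have hF : HasFDerivAt (fun q : ℂ × ℂ => 4 * ‖q.2‖ ^ 2 - r ^ 2 * (1 + ‖q.1‖ ^ 2) ^ 2) _ p :=
    (hasFDerivAt_snd.norm_sq.const_mul (4 : ℝ)).sub ((hS.pow 2).const_mul (r ^ 2))
  have hFtangent : Ftangent r = fun q : ℂ × ℂ => 4 * ‖q.2‖ ^ 2 - r ^ 2 * (1 + ‖q.1‖ ^ 2) ^ 2 := by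
    funext q
    simp only [Ftangent, normSq_eq_norm_sq]
  rw [hFtangent, hF.fderiv]
  simp only [Nat.add_one_sub_one, pow_one, nsmul_eq_mul, Nat.cast_ofNat, sub_apply, smul_apply,
    smul_eq_mul, ContinuousLinearMap.comp_apply, ContinuousLinearMap.coe_fst',
    ContinuousLinearMap.coe_snd', coe_innerSL_apply, Complex.inner, mul_re, conj_re, conj_im,
    normSq_eq_norm_sq]
  ring

lemma fderiv_Ftangent_rotate (r : ℝ) (p : ℂ × ℂ) :
    fderiv ℝ (Ftangent r) p (0, I * p.2) = 0 := by
  rw [fderiv_Ftangent_apply]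
  simp only [mul_re, mul_im, conj_re, conj_im, I_re, I_im, zero_re, zero_im]
  ring

lemma fderiv_Ftangent_scale {r : ℝ} {p : ℂ × ℂ} (hp : Ftangent r p = 0) (u : ℂ) :
    fderiv ℝ (Ftangent r) p
      (u, ((2 * (conj p.1 * u).re / (1 + normSq p.1) : ℝ) : ℂ) * p.2) = 0 := by
  have hS : 1 + normSq p.1 ≠ 0 := (add_pos_of_pos_of_nonneg one_pos (normSq_nonneg _)).ne'
  rw [fderiv_Ftangent_apply, ← mul_left_comm, re_ofReal_mul, ← normSq_eq_conj_mul_self,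
    ofReal_re]
  unfold Ftangent at hp
  field_simp
  linear_combination 4 * (conj p.1 * u).re * hp

-- The identity rests on `Im(ξ̄η)|z|² = Im(ξ̄z) Re(η̄z) - Re(ξ̄z) Im(η̄z)`.
lemma Gneutral_self_eq (p v : ℂ × ℂ) :
    Gneutral p v v =
      2 * Gneutral p v (v.1, ((2 * (conj p.1 * v.1).re / (1 + normSq p.1) : ℝ) : ℂ) * p.2) +
        4 * (conj p.1 * v.1).im / (1 + normSq p.1) * Gneutral p v (0, I * p.2) := by
  have hS : 1 + normSq p.1 ≠ 0 := (add_pos_of_pos_of_nonneg one_pos (normSq_nonneg _)).ne'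
  unfold Gneutral
  simp only [add_im, add_re, mul_im, mul_re, conj_re, conj_im, I_re, I_im, ofReal_re,
    ofReal_im, zero_re, zero_im]
  field_simp
  ring

theorem stmt5_general (r : ℝ) (p : ℂ × ℂ) (hp : Ftangent r p = 0)
    (v : ℂ × ℂ) (hv : ∀ w : ℂ × ℂ, fderiv ℝ (Ftangent r) p w = 0 → Gneutral p v w = 0) :
    Gneutral p v v = 0 := by
  rw [Gneutral_self_eq, hv _ (fderiv_Ftangent_scale hp v.1), hv _ (fderiv_Ftangent_rotate r p)]
  ring

/-- The tangent hypersurface {F = 0} is null with respect to the neutral metric G: any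
vector G-orthogonal to the kernel of dF (i.e. a G-normal of the hypersurface) is null. -/
theorem stmt5 (r : ℝ) (hr : 0 < r) (p : ℂ × ℂ) (hp : Ftangent r p = 0)
    (v : ℂ × ℂ) (hv : ∀ w : ℂ × ℂ, fderiv ℝ (Ftangent r) p w = 0 → Gneutral p v w = 0) :
    Gneutral p v v = 0 :=
  stmt5_general r p hp v hv
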